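/- arXiv:2011.12392 — 3 statements merged into one kernel-verified Lean document; each statement's English description precedes it below -/
import Mathlib

section
/- Let W : ℝ^q → ℝ be differentiable with L-Lipschitz gradient (L ≥ 0). Let s ∈ ℝ^q, let B be a self-adjoint continuous linear operator on ℝ^q satisfying v_min ‖a‖² ≤ ⟨B a, a⟩ ≤ v_max ‖a‖² for all a ∈ ℝ^q, where 0 < v_min ≤ v_max, and let h ∈ ℝ^q be such that ∇W(s) = −B h. Then for every γ > 0 and every S ∈ ℝ^q: W(s + γ S) − W(s) ≤ −(γ/2)(v_min − γ L) ‖S‖² − (γ v_min / 2) ‖h‖² + (γ v_max / 2) ‖h − S‖². -/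
open scoped RealInnerProductSpace NNReal

/-!
The descent lemma for an `L`-smooth function bounds `W (s + γ • S) - W s` by
`γ ⟪∇W s, S⟫ + (L / 2) γ² ‖S‖²`, and `∇W s = -B h` turns the linear term into `-γ ⟪B h, S⟫`.
Polarizing the symmetric form `⟪B ·, ·⟫` at `h`, `S` and `h - S` and using the spectral bounds
gives `2 ⟪B h, S⟫ ≥ v_min ‖h‖² + v_min ‖S‖² - v_max ‖h - S‖²`.
-/

variable {E : Type*} [NormedAddCommGroup E] [InnerProductSpace ℝ E]

theorem LipschitzWith.inner_sub_le {K : ℝ≥0} {g : E → E} (hg : LipschitzWith K g) (x y : E) :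
    ⟪g y - g x, y - x⟫ ≤ K * ‖y - x‖ ^ 2 :=
  calc ⟪g y - g x, y - x⟫ ≤ ‖g y - g x‖ * ‖y - x‖ := real_inner_le_norm _ _
    _ ≤ K * ‖y - x‖ * ‖y - x‖ := by
        gcongr
        simpa only [dist_eq_norm] using hg.dist_le_mul y x
    _ = K * ‖y - x‖ ^ 2 := by ring

theorem LinearMap.IsSymmetric.inner_map_sub_self {T : E →ₗ[ℝ] E} (hT : T.IsSymmetric)
    (x y : E) : ⟪T (x - y), x - y⟫ = ⟪T x, x⟫ - 2 * ⟪T x, y⟫ + ⟪T y, y⟫ := by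
  have hyx : ⟪T y, x⟫ = ⟪T x, y⟫ := by rw [hT y x, real_inner_comm]
  rw [map_sub, inner_sub_left, inner_sub_right, inner_sub_right, hyx]
  ring

theorem LinearMap.IsSymmetric.le_two_mul_inner_map {T : E →ₗ[ℝ] E} (hT : T.IsSymmetric)
    {m M : ℝ} {x y : E} (hx : m * ‖x‖ ^ 2 ≤ ⟪T x, x⟫) (hy : m * ‖y‖ ^ 2 ≤ ⟪T y, y⟫)
    (hxy : ⟪T (x - y), x - y⟫ ≤ M * ‖x - y‖ ^ 2) :
    m * ‖x‖ ^ 2 + m * ‖y‖ ^ 2 - M * ‖x - y‖ ^ 2 ≤ 2 * ⟪T x, y⟫ := by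
  rw [hT.inner_map_sub_self] at hxy
  linarith

variable [CompleteSpace E]

theorem Differentiable.hasDerivAt_comp_add_smul {f : E → ℝ} (hf : Differentiable ℝ f)
    (x v : E) (t : ℝ) :
    HasDerivAt (fun t : ℝ => f (x + t • v)) ⟪gradient f (x + t • v), v⟫ t := by
  have hline : HasDerivAt (fun t : ℝ => x + t • v) v t := by
    simpa using ((hasDerivAt_id t).smul_const v).const_add x
  exact (hasGradientAt_iff_hasFDerivAt.mp (hf _).hasGradientAt).comp_hasDerivAt t hline

theorem LipschitzWith.le_add_inner_gradient_add {f : E → ℝ} {K : ℝ≥0} (hf : Differentiable ℝ f)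
    (hK : LipschitzWith K (gradient f)) (x v : E) :
    f (x + v) ≤ f x + ⟪gradient f x, v⟫ + K / 2 * ‖v‖ ^ 2 := by
  set φ : ℝ → ℝ := fun t => f (x + t • v) - t * ⟪gradient f x, v⟫ - K / 2 * t ^ 2 * ‖v‖ ^ 2
  have hφ : ∀ t, HasDerivAt φ
      (⟪gradient f (x + t • v), v⟫ - ⟪gradient f x, v⟫ - K * t * ‖v‖ ^ 2) t := by
    intro t
    refine (((hf.hasDerivAt_comp_add_smul x v t).sub
      ((hasDerivAt_id t).mul_const ⟪gradient f x, v⟫)).sub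
      (((hasDerivAt_pow 2 t).const_mul (K / 2 : ℝ)).mul_const (‖v‖ ^ 2))).congr_deriv ?_
    simp only [Nat.cast_ofNat]
    ring
  have hanti : AntitoneOn φ (Set.Icc 0 1) := by
    refine antitoneOn_of_hasDerivWithinAt_nonpos (convex_Icc 0 1)
      (fun t _ => (hφ t).continuousAt.continuousWithinAt) (fun t _ => (hφ t).hasDerivWithinAt) ?_
    intro t ht
    rw [interior_Icc] at ht
    have hstep := hK.inner_sub_le x (x + t • v)
    rw [add_sub_cancel_left, inner_smul_right, norm_smul, Real.norm_eq_abs, abs_of_pos ht.1,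
      inner_sub_left] at hstep
    -- `t φ' t = ⟪∇f (x + t • v) - ∇f x, t • v⟫ - K ‖t • v‖²`
    refine nonpos_of_mul_nonpos_right ?_ ht.1
    linarith
  have hφ10 : φ 1 ≤ φ 0 := hanti (by simp) (by simp) zero_le_one
  simp only [φ, one_smul, zero_smul, add_zero, one_mul, one_pow, zero_mul, sub_zero,
    ne_eq, OfNat.ofNat_ne_zero, not_false_eq_true, zero_pow, mul_zero] at hφ10
  linarith

theorem stmt_9_general (q : ℕ) (W : EuclideanSpace ℝ (Fin q) → ℝ)
    (hW : Differentiable ℝ W) (L : ℝ) (hL : 0 ≤ L)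
    (hLip : LipschitzWith L.toNNReal (gradient W))
    (s : EuclideanSpace ℝ (Fin q))
    (B : EuclideanSpace ℝ (Fin q) →L[ℝ] EuclideanSpace ℝ (Fin q))
    (hB : ∀ x y, ⟪B x, y⟫ = ⟪x, B y⟫)
    (vmin vmax : ℝ)
    (hspec : ∀ a : EuclideanSpace ℝ (Fin q),
      vmin * ‖a‖ ^ 2 ≤ ⟪B a, a⟫ ∧ ⟪B a, a⟫ ≤ vmax * ‖a‖ ^ 2)
    (h : EuclideanSpace ℝ (Fin q)) (hgrad : gradient W s = -(B h))
    (γ : ℝ) (hγ : 0 < γ) (S : EuclideanSpace ℝ (Fin q)) :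
    W (s + γ • S) - W s
      ≤ -(γ / 2) * (vmin - γ * L) * ‖S‖ ^ 2 - (γ * vmin / 2) * ‖h‖ ^ 2
          + (γ * vmax / 2) * ‖h - S‖ ^ 2 := by
  have hdescent := hLip.le_add_inner_gradient_add hW s (γ • S)
  rw [Real.coe_toNNReal L hL, hgrad, inner_neg_left, inner_smul_right, norm_smul,
    Real.norm_eq_abs, abs_of_pos hγ] at hdescent
  have hBsymm : (B : EuclideanSpace ℝ (Fin q) →ₗ[ℝ] _).IsSymmetric := hB
  have hpolar := hBsymm.le_two_mul_inner_map (hspec h).1 (hspec S).1 (hspec (h - S)).2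
  have hscaled := mul_le_mul_of_nonneg_left hpolar hγ.le
  simp only [ContinuousLinearMap.coe_coe] at hscaled
  linarith

/-- **Proposition (one-step descent with spectral bounds).**
If `W : ℝ^q → ℝ` is differentiable with `L`-Lipschitz gradient, `B` is self-adjoint with
`v_min ‖a‖² ≤ ⟨Ba,a⟩ ≤ v_max ‖a‖²` (`0 < v_min ≤ v_max`), and `∇W(s) = -B h`, then for all
`γ > 0` and `S`,
`W(s + γS) - W(s) ≤ -(γ/2)(v_min - γL)‖S‖² - (γ v_min/2)‖h‖² + (γ v_max/2)‖h - S‖²`. -/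
theorem stmt_9 (q : ℕ) (W : EuclideanSpace ℝ (Fin q) → ℝ)
    (hW : Differentiable ℝ W) (L : ℝ) (hL : 0 ≤ L)
    (hLip : LipschitzWith L.toNNReal (gradient W))
    (s : EuclideanSpace ℝ (Fin q))
    (B : EuclideanSpace ℝ (Fin q) →L[ℝ] EuclideanSpace ℝ (Fin q))
    (hB : ∀ x y, ⟪B x, y⟫ = ⟪x, B y⟫)
    (vmin vmax : ℝ) (hvmin : 0 < vmin) (hvminmax : vmin ≤ vmax)
    (hspec : ∀ a : EuclideanSpace ℝ (Fin q),
      vmin * ‖a‖ ^ 2 ≤ ⟪B a, a⟫ ∧ ⟪B a, a⟫ ≤ vmax * ‖a‖ ^ 2)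
    (h : EuclideanSpace ℝ (Fin q)) (hgrad : gradient W s = -(B h))
    (γ : ℝ) (hγ : 0 < γ) (S : EuclideanSpace ℝ (Fin q)) :
    W (s + γ • S) - W s
      ≤ -(γ / 2) * (vmin - γ * L) * ‖S‖ ^ 2 - (γ * vmin / 2) * ‖h‖ ^ 2
          + (γ * vmax / 2) * ‖h - S‖ ^ 2 :=
  stmt_9_general q W hW L hL hLip s B hB vmin vmax hspec h hgrad γ hγ S
end

section
/- Let W : ℝ^q → ℝ be differentiable with L-Lipschitz gradient (L ≥ 0). Let s ∈ ℝ^q, let B be a self-adjoint continuous linear operator on ℝ^q satisfying v_min ‖a‖² ≤ ⟨B a, a⟩ ≤ v_max ‖a‖² for all a ∈ ℝ^q, where 0 < v_min ≤ v_max, and let h ∈ ℝ^q be such that ∇W(s) = −B h. Then for every γ ≥ 0 and every ε ∈ ℝ^q (perturbation of the full-batch refresh): W(s + γ (h + ε)) − W(s) ≤ −(γ v_min / 2) ‖h‖² + (γ v_max / 2) ‖ε‖² − (γ/2)(v_min − γ L) ‖h + ε‖². -/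
/-!
Along the segment `t ↦ s + t • u`, the Lipschitz bound on `∇W` makes the derivative of
`W (s + t • u)` exceed `⟪∇W s, u⟫` by at most `L t ‖u‖²`; integrating gives the descent lemma
`W (s + u) - W s ≤ ⟪∇W s, u⟫ + (L / 2) ‖u‖²`. With `u = γ (h + ε)` and `∇W s = -B h`, the linear
term is `-γ ⟪B h, h + ε⟫`, and polarizing the symmetric form,
`2 ⟪B h, h + ε⟫ = ⟪B h, h⟫ + ⟪B (h + ε), h + ε⟫ - ⟪B ε, ε⟫`, so the spectral bounds on `B`
give the three quadratic terms of the estimate.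
-/

open scoped RealInnerProductSpace NNReal

section Descent

variable {E : Type*} [NormedAddCommGroup E] [InnerProductSpace ℝ E] [CompleteSpace E]
  {W : E → ℝ}

theorem hasDerivAt_comp_add_smul_of_differentiable (hW : Differentiable ℝ W) (x u : E) (t : ℝ) :
    HasDerivAt (fun t : ℝ => W (x + t • u)) ⟪gradient W (x + t • u), u⟫ t := by
  have hline : HasDerivAt (fun t : ℝ => x + t • u) u t := by
    simpa using ((hasDerivAt_id t).smul_const u).const_add x
  have hWx : HasFDerivAt W (InnerProductSpace.toDual ℝ E (gradient W (x + t • u))) (x + t • u) :=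
    hasGradientAt_iff_hasFDerivAt.1 (hW _).hasGradientAt
  simpa [Function.comp_def] using hWx.comp_hasDerivAt t hline

theorem inner_gradient_add_smul_sub_le {K : ℝ≥0} (hLip : LipschitzWith K (gradient W))
    (x u : E) {t : ℝ} (ht : 0 ≤ t) :
    ⟪gradient W (x + t • u) - gradient W x, u⟫ ≤ K * t * ‖u‖ ^ 2 := by
  have hdist : ‖gradient W (x + t • u) - gradient W x‖ ≤ K * (t * ‖u‖) := by
    simpa [← dist_eq_norm, norm_smul, abs_of_nonneg ht] using hLip.dist_le_mul (x + t • u) x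
  calc ⟪gradient W (x + t • u) - gradient W x, u⟫
      ≤ ‖gradient W (x + t • u) - gradient W x‖ * ‖u‖ := real_inner_le_norm _ _
    _ ≤ K * (t * ‖u‖) * ‖u‖ := by gcongr
    _ = K * t * ‖u‖ ^ 2 := by ring

theorem sub_le_inner_gradient_add_of_lipschitzWith {K : ℝ≥0} (hW : Differentiable ℝ W)
    (hLip : LipschitzWith K (gradient W)) (x u : E) :
    W (x + u) - W x ≤ ⟪gradient W x, u⟫ + K / 2 * ‖u‖ ^ 2 := by
  set f : ℝ → ℝ := fun t => W (x + t • u) - W x - t * ⟪gradient W x, u⟫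
  set bound : ℝ → ℝ := fun t => K / 2 * t ^ 2 * ‖u‖ ^ 2
  have hf : ∀ t, HasDerivAt f (⟪gradient W (x + t • u), u⟫ - ⟪gradient W x, u⟫) t := fun t =>
    ((hasDerivAt_comp_add_smul_of_differentiable hW x u t).sub_const _).sub
      (by simpa using (hasDerivAt_id t).mul_const _)
  have hbound : ∀ t, HasDerivAt bound (K * t * ‖u‖ ^ 2) t := fun t =>
    (((hasDerivAt_pow 2 t).const_mul ((K : ℝ) / 2)).mul_const (‖u‖ ^ 2)).congr_deriv
      (by push_cast; ring)
  have hf_le_bound := image_le_of_deriv_right_le_deriv_boundary (a := 0) (b := 1)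
    (fun t _ => (hf t).continuousAt.continuousWithinAt) (fun t _ => (hf t).hasDerivWithinAt)
    (by simp [f, bound]) (fun t _ => (hbound t).continuousAt.continuousWithinAt)
    (fun t _ => (hbound t).hasDerivWithinAt)
    (fun t ht => by
      simpa [inner_sub_left] using inner_gradient_add_smul_sub_le hLip x u ht.1)
    (Set.right_mem_Icc.2 zero_le_one)
  simp only [f, bound, one_smul, one_mul, one_pow, mul_one] at hf_le_bound
  linarith

end Descent

section SymmetricForm

variable {E : Type*} [NormedAddCommGroup E] [InnerProductSpace ℝ E] {B : E →ₗ[ℝ] E}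

theorem LinearMap.IsSymmetric.inner_map_add_right (hB : B.IsSymmetric) (h ε : E) :
    ⟪B h, h + ε⟫ = (⟪B h, h⟫ + ⟪B (h + ε), h + ε⟫ - ⟪B ε, ε⟫) / 2 := by
  have hswap : ⟪B ε, h⟫ = ⟪B h, ε⟫ := by rw [hB, real_inner_comm]
  simp only [map_add, inner_add_left, inner_add_right, hswap]
  ring

theorem LinearMap.IsSymmetric.neg_inner_map_add_right_le (hB : B.IsSymmetric) {vmin vmax : ℝ}
    (hspec : ∀ a : E, vmin * ‖a‖ ^ 2 ≤ ⟪B a, a⟫ ∧ ⟪B a, a⟫ ≤ vmax * ‖a‖ ^ 2) (h ε : E) :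
    -⟪B h, h + ε⟫
      ≤ -(vmin / 2) * ‖h‖ ^ 2 + vmax / 2 * ‖ε‖ ^ 2 - vmin / 2 * ‖h + ε‖ ^ 2 := by
  rw [hB.inner_map_add_right]
  linarith [(hspec h).1, (hspec ε).2, (hspec (h + ε)).1]

end SymmetricForm

theorem stmt_10_general (q : ℕ) (W : EuclideanSpace ℝ (Fin q) → ℝ)
    (hW : Differentiable ℝ W) (L : ℝ) (hL : 0 ≤ L)
    (hLip : LipschitzWith L.toNNReal (gradient W))
    (s : EuclideanSpace ℝ (Fin q))
    (B : EuclideanSpace ℝ (Fin q) →L[ℝ] EuclideanSpace ℝ (Fin q))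
    (hB : ∀ x y, ⟪B x, y⟫ = ⟪x, B y⟫)
    (vmin vmax : ℝ)
    (hspec : ∀ a : EuclideanSpace ℝ (Fin q),
      vmin * ‖a‖ ^ 2 ≤ ⟪B a, a⟫ ∧ ⟪B a, a⟫ ≤ vmax * ‖a‖ ^ 2)
    (h : EuclideanSpace ℝ (Fin q)) (hgrad : gradient W s = -(B h))
    (γ : ℝ) (hγ : 0 ≤ γ) (ε : EuclideanSpace ℝ (Fin q)) :
    W (s + γ • (h + ε)) - W s
      ≤ -(γ * vmin / 2) * ‖h‖ ^ 2 + (γ * vmax / 2) * ‖ε‖ ^ 2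
          - (γ / 2) * (vmin - γ * L) * ‖h + ε‖ ^ 2 := by
  have hdescent := sub_le_inner_gradient_add_of_lipschitzWith hW hLip s (γ • (h + ε))
  rw [Real.coe_toNNReal L hL, hgrad, inner_smul_right, inner_neg_left, norm_smul,
    Real.norm_of_nonneg hγ] at hdescent
  have hform : -⟪B h, h + ε⟫
      ≤ -(vmin / 2) * ‖h‖ ^ 2 + vmax / 2 * ‖ε‖ ^ 2 - vmin / 2 * ‖h + ε‖ ^ 2 :=
    LinearMap.IsSymmetric.neg_inner_map_add_right_le (B := B.toLinearMap) hB hspec h ε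
  linarith [mul_le_mul_of_nonneg_left hform hγ]

/-- **Proposition (one-step decrease at the refresh step of g-SPIDER-EM).**
If `W : ℝ^q → ℝ` is differentiable with `L`-Lipschitz gradient, `B` is self-adjoint with
`v_min ‖a‖² ≤ ⟨Ba,a⟩ ≤ v_max ‖a‖²` (`0 < v_min ≤ v_max`), and `∇W(s) = -B h`, then for all
`γ ≥ 0` and every perturbation `ε`,
`W(s + γ(h+ε)) - W(s) ≤ -(γ v_min/2)‖h‖² + (γ v_max/2)‖ε‖² - (γ/2)(v_min - γL)‖h+ε‖²`. -/
theorem stmt_10 (q : ℕ) (W : EuclideanSpace ℝ (Fin q) → ℝ)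
    (hW : Differentiable ℝ W) (L : ℝ) (hL : 0 ≤ L)
    (hLip : LipschitzWith L.toNNReal (gradient W))
    (s : EuclideanSpace ℝ (Fin q))
    (B : EuclideanSpace ℝ (Fin q) →L[ℝ] EuclideanSpace ℝ (Fin q))
    (hB : ∀ x y, ⟪B x, y⟫ = ⟪x, B y⟫)
    (vmin vmax : ℝ) (hvmin : 0 < vmin) (hvminmax : vmin ≤ vmax)
    (hspec : ∀ a : EuclideanSpace ℝ (Fin q),
      vmin * ‖a‖ ^ 2 ≤ ⟪B a, a⟫ ∧ ⟪B a, a⟫ ≤ vmax * ‖a‖ ^ 2)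
    (h : EuclideanSpace ℝ (Fin q)) (hgrad : gradient W s = -(B h))
    (γ : ℝ) (hγ : 0 ≤ γ) (ε : EuclideanSpace ℝ (Fin q)) :
    W (s + γ • (h + ε)) - W s
      ≤ -(γ * vmin / 2) * ‖h‖ ^ 2 + (γ * vmax / 2) * ‖ε‖ ^ 2
          - (γ / 2) * (vmin - γ * L) * ‖h + ε‖ ^ 2 :=
  stmt_10_general q W hW L hL hLip s B hB vmin vmax hspec h hgrad γ hγ ε
end

section
/- Let ρ ∈ (0,1), c > 0, e ≥ 0, m ∈ ℝ, and let h : ℕ → ℝ be nonnegative and w : ℕ → ℝ be such that w_k ≥ m for all k, with ∑_{k≥0} ρ^k h_k < ∞ and ∑_{k≥0} ρ^k |w_k| < ∞. Write E[x_ξ] := (1−ρ)·∑_{k=1}^∞ ρ^{k−1} x_k and E[x_{ξ−1}] := (1−ρ)·∑_{k=1}^∞ ρ^{k−1} x_{k−1}. If (c/(1−ρ)) · E[h_{ξ−1}] ≤ w_0 − E[w_ξ] + e, then E[h_ξ] ≤ ((1−ρ)/(c ρ)) · (w_0 − m + e). -/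
/-
Write `H = ∑ ρ^k h_k` and `H' = ∑ ρ^k h_{k+1}`. Splitting off the first term gives
`H = h_0 + ρ H' ≥ ρ H'` since `h ≥ 0`, while `E[w_ξ] ≥ m` because `E` averages with weights
`(1-ρ) ρ^k` of total mass one. The hypothesis therefore yields `c ρ H' ≤ c H ≤ w_0 - m + e`.
-/

section GeometricWeights

variable {K : Type*} [Field K] [TopologicalSpace K] [IsTopologicalRing K]

theorem Summable.pow_mul_succ {ρ : K} (hρ : ρ ≠ 0) {f : ℕ → K}
    (hf : Summable fun k => ρ ^ k * f k) : Summable fun k => ρ ^ k * f (k + 1) := by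
  have hshift : Summable fun k => ρ⁻¹ * (ρ ^ (k + 1) * f (k + 1)) :=
    ((summable_nat_add_iff 1).2 hf).mul_left ρ⁻¹
  convert hshift using 2 with k
  rw [pow_succ, mul_comm (ρ ^ k) ρ, mul_assoc, inv_mul_cancel_left₀ hρ]

theorem tsum_pow_mul_eq_add_mul_tsum_succ [T2Space K] (ρ : K) {f : ℕ → K}
    (hf : Summable fun k => ρ ^ k * f k) :
    ∑' k, ρ ^ k * f k = f 0 + ρ * ∑' k, ρ ^ k * f (k + 1) := by
  rw [hf.tsum_eq_zero_add, ← tsum_mul_left]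
  simp only [pow_zero, one_mul, pow_succ, mul_comm _ ρ, mul_assoc]

end GeometricWeights

theorem le_one_sub_mul_tsum_pow_mul {ρ m : ℝ} (hρ0 : 0 ≤ ρ) (hρ1 : ρ < 1) {x : ℕ → ℝ}
    (hx : Summable fun k => ρ ^ k * x k) (hm : ∀ k, m ≤ x k) :
    m ≤ (1 - ρ) * ∑' k, ρ ^ k * x k := by
  have hgeom : ∑' k : ℕ, ρ ^ k * m = (1 - ρ)⁻¹ * m := by
    rw [tsum_mul_right, tsum_geometric_of_lt_one hρ0 hρ1]
  have hle : (1 - ρ)⁻¹ * m ≤ ∑' k, ρ ^ k * x k := hgeom ▸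
    ((summable_geometric_of_lt_one hρ0 hρ1).mul_right m).tsum_le_tsum
      (fun k => mul_le_mul_of_nonneg_left (hm k) (pow_nonneg hρ0 k)) hx
  have hpos : 0 < 1 - ρ := sub_pos.2 hρ1
  calc m = (1 - ρ) * ((1 - ρ)⁻¹ * m) := by field_simp
    _ ≤ (1 - ρ) * ∑' k, ρ ^ k * x k := mul_le_mul_of_nonneg_left hle hpos.le

theorem Summable.pow_mul_of_pow_mul_abs {ρ : ℝ} (hρ : 0 ≤ ρ) {x : ℕ → ℝ}
    (hx : Summable fun k => ρ ^ k * |x k|) : Summable fun k => ρ ^ k * x k :=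
  hx.of_norm_bounded fun k => by
    rw [Real.norm_eq_abs, abs_mul, abs_of_nonneg (pow_nonneg hρ k)]

theorem stmt_14_general (ρ : ℝ) (hρ : ρ ∈ Set.Ioo (0 : ℝ) 1) (c e m : ℝ)
    (hc : 0 < c)
    (h w : ℕ → ℝ) (hh : ∀ k, 0 ≤ h k) (hw : ∀ k, m ≤ w k)
    (hsumh : Summable fun k : ℕ => ρ ^ k * h k)
    (hsumw : Summable fun k : ℕ => ρ ^ k * |w k|)
    (hmain : c / (1 - ρ) * ((1 - ρ) * ∑' k : ℕ, ρ ^ k * h k)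
      ≤ w 0 - (1 - ρ) * ∑' k : ℕ, ρ ^ k * w (k + 1) + e) :
    (1 - ρ) * ∑' k : ℕ, ρ ^ k * h (k + 1)
      ≤ (1 - ρ) / (c * ρ) * (w 0 - m + e) := by
  obtain ⟨hρ0, hρ1⟩ := hρ
  have hpos : 0 < 1 - ρ := sub_pos.2 hρ1
  have hEw : m ≤ (1 - ρ) * ∑' k, ρ ^ k * w (k + 1) :=
    le_one_sub_mul_tsum_pow_mul hρ0.le hρ1
      ((hsumw.pow_mul_of_pow_mul_abs hρ0.le).pow_mul_succ hρ0.ne') fun k => hw (k + 1)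
  have hcH : c * ∑' k, ρ ^ k * h k ≤ w 0 - m + e := by
    rw [← mul_assoc, div_mul_cancel₀ c hpos.ne'] at hmain
    linarith
  have hcρH' : c * ρ * ∑' k, ρ ^ k * h (k + 1) ≤ w 0 - m + e := by
    rw [tsum_pow_mul_eq_add_mul_tsum_succ ρ hsumh] at hcH
    linarith [mul_nonneg hc.le (hh 0)]
  rw [div_mul_eq_mul_div, le_div_iff₀ (mul_pos hc hρ0)]
  calc ((1 - ρ) * ∑' k, ρ ^ k * h (k + 1)) * (c * ρ)
      = (1 - ρ) * (c * ρ * ∑' k, ρ ^ k * h (k + 1)) := by ring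
    _ ≤ (1 - ρ) * (w 0 - m + e) := mul_le_mul_of_nonneg_left hcρH' hpos.le

/-- **Lemma (per-epoch bound from the main theorem, deterministic core).**
Let `ρ ∈ (0,1)`, `c > 0`, `e ≥ 0`, `m ∈ ℝ`, `h : ℕ → ℝ` nonnegative, `w : ℕ → ℝ` with
`w_k ≥ m` for all `k`, `∑ ρ^k h_k < ∞` and `∑ ρ^k |w_k| < ∞`. Writing
`E[x_ξ] := (1-ρ) ∑_{k≥1} ρ^{k-1} x_k` and `E[x_{ξ-1}] := (1-ρ) ∑_{k≥1} ρ^{k-1} x_{k-1}`, if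
`(c/(1-ρ)) E[h_{ξ-1}] ≤ w_0 - E[w_ξ] + e`, then `E[h_ξ] ≤ ((1-ρ)/(cρ)) (w_0 - m + e)`. -/
theorem stmt_14 (ρ : ℝ) (hρ : ρ ∈ Set.Ioo (0 : ℝ) 1) (c e m : ℝ)
    (hc : 0 < c) (he : 0 ≤ e)
    (h w : ℕ → ℝ) (hh : ∀ k, 0 ≤ h k) (hw : ∀ k, m ≤ w k)
    (hsumh : Summable fun k : ℕ => ρ ^ k * h k)
    (hsumw : Summable fun k : ℕ => ρ ^ k * |w k|)
    (hmain : c / (1 - ρ) * ((1 - ρ) * ∑' k : ℕ, ρ ^ k * h k)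
      ≤ w 0 - (1 - ρ) * ∑' k : ℕ, ρ ^ k * w (k + 1) + e) :
    (1 - ρ) * ∑' k : ℕ, ρ ^ k * h (k + 1)
      ≤ (1 - ρ) / (c * ρ) * (w 0 - m + e) :=
  stmt_14_general ρ hρ c e m hc h w hh hw hsumh hsumw hmain
end
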